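/- arXiv:2107.05486 — 7 statements merged into one kernel-verified Lean document; each statement's English description precedes it below -/
import Mathlib

section
/- For all integers q ≥ 4, k ≥ 2 and d ≥ 3q^k, the function h1(x) := ((x^{d+1} − 1)/(x^d − 1))^d·(q^k − q) − (x^d − 1)/(x − 1) + q − x^d has at least one root in (1, ∞); moreover there is a smallest such root x*, satisfying h1(x) < 0 for all x ∈ (1, x*), and x* > x**, where x** is the unique root in (1, ∞) of h2(x) := ((x^{d+1} − 1)/(x^d − 1))^d·(q^k − q) − (x^d − 1)/(x − 1) + (q − 1)·x^d; consequently h2(x*) > 0. -/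
open Finset

/-- The function `h1(x) = ((x^{d+1} − 1)/(x^d − 1))^d·(q^k − q) − (x^d − 1)/(x − 1)
+ q − x^d`. -/
noncomputable def h1 (q k d : ℕ) (x : ℝ) : ℝ :=
  ((x ^ (d + 1) - 1) / (x ^ d - 1)) ^ d * ((q : ℝ) ^ k - q)
    - (x ^ d - 1) / (x - 1) + (q : ℝ) - x ^ d

/-- The function `h2(x) = ((x^{d+1} − 1)/(x^d − 1))^d·(q^k − q) − (x^d − 1)/(x − 1)
+ (q − 1)·x^d`. -/
noncomputable def h2 (q k d : ℕ) (x : ℝ) : ℝ :=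
  ((x ^ (d + 1) - 1) / (x ^ d - 1)) ^ d * ((q : ℝ) ^ k - q)
    - (x ^ d - 1) / (x - 1) + ((q : ℝ) - 1) * x ^ d

namespace Stmt8Aux

noncomputable def S (n : ℕ) (x : ℝ) : ℝ := ∑ i ∈ range n, x ^ i
noncomputable def D (n : ℕ) (x : ℝ) : ℝ := ∑ i ∈ range n, (i:ℝ) * x ^ (i-1)
noncomputable def F (d : ℕ) (x : ℝ) : ℝ := S d x ^ (d+1) / S (d+1) x ^ d
noncomputable def phi (q d : ℕ) (x : ℝ) : ℝ := F d x - ((q:ℝ)-1) * (1 - 1/S (d+1) x)^d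

lemma S_succ (n : ℕ) (x : ℝ) : S (n+1) x = x * S n x + 1 := geom_sum_succ
lemma S_top (n : ℕ) (x : ℝ) : S (n+1) x = S n x + x ^ n := sum_range_succ _ n
lemma S_geom (n : ℕ) (x : ℝ) : S n x * (x-1) = x ^ n - 1 := geom_sum_mul x n

lemma hasDerivAt_S (n : ℕ) (x : ℝ) : HasDerivAt (fun y => S n y) (D n x) x :=
  HasDerivAt.fun_sum fun i _ => hasDerivAt_pow i x

lemma S_ge {n : ℕ} {x : ℝ} (hx : 1 ≤ x) : (n:ℝ) ≤ S n x := by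
  calc (n:ℝ) = ∑ _i ∈ range n, (1:ℝ) := by simp
  _ ≤ S n x := sum_le_sum fun i _ => one_le_pow₀ hx

lemma S_pos {n : ℕ} (hn : 1 ≤ n) {x : ℝ} (hx : 1 ≤ x) : 0 < S n x := by
  have h1 : (1:ℝ) ≤ n := by exact_mod_cast hn
  linarith [S_ge (n := n) hx]

lemma D_mul (n : ℕ) (x : ℝ) : D n x * (x - 1) = n * x ^ (n-1) - S n x := by
  induction n with
  | zero => simp [D, S]
  | succ m ih =>
    rcases Nat.eq_zero_or_pos m with hm | hm
    · subst hm; simp [D, S]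
    · have hDm : D (m+1) x = D m x + m * x ^ (m-1) := sum_range_succ _ m
      have hpow : x * x ^ (m-1) = x ^ m := by
        rw [← pow_succ']; congr 1; omega
      have h2 : (m : ℝ) * x ^ (m-1) * (x - 1) = m * x ^ m - m * x ^ (m-1) := by
        have h3 : (m:ℝ) * x ^ (m-1) * (x-1) = (m:ℝ) * (x * x ^ (m-1)) - m * x ^ (m-1) := by ring
        rw [h3, hpow]
      rw [hDm, add_mul, ih, h2, S_top]
      push_cast [Nat.add_sub_cancel]
      ring

lemma pair_pow {x : ℝ} (hx : 1 ≤ x) {e a b : ℕ} (hab : a + b = 2*e + 1) :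
    2 * x ^ e ≤ x ^ a + x ^ b := by
  wlog h : a ≤ b with H
  · have := H hx (e:=e) (a:=b) (b:=a) (by omega) (by omega)
    linarith
  have ha : a ≤ e := by omega
  obtain ⟨u, hu⟩ : ∃ u, e = a + u := ⟨e - a, by omega⟩
  have hb : b = a + (2*u+1) := by omega
  subst hu hb
  have hxa : (0:ℝ) < x ^ a := pow_pos (by linarith) _
  have hy : 1 ≤ x ^ u := one_le_pow₀ hx
  rw [pow_add, pow_add]
  have h3 : x ^ (2*u+1) = x^u * x^u * x := by rw [pow_succ, two_mul, pow_add]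
  rw [h3]
  have hid : 1 + x^u*x^u*x - 2*x^u = (x^u-1)^2 + x^u*x^u*(x-1) := by ring
  have h4 : (0:ℝ) ≤ (x^u-1)^2 + x^u*x^u*(x-1) := by
    have h5 : (0:ℝ) ≤ x^u*x^u*(x-1) := by
      apply mul_nonneg (by positivity); linarith
    nlinarith [sq_nonneg (x^u-1)]
  nlinarith [mul_nonneg hxa.le (hid ▸ h4)]

lemma key {d : ℕ} (hd : 1 ≤ d) {x : ℝ} (hx : 1 ≤ x) :
    (d:ℝ) * (d+1) * x ^ (d-1) ≤ S d x * S (d+1) x := by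
  have hrw : S d x * S (d+1) x = ∑ i ∈ range d, ∑ j ∈ range (d+1), x ^ (i+j) := by
    rw [S, S, sum_mul_sum]
    exact sum_congr rfl fun i _ => sum_congr rfl fun j _ => (pow_add x i j).symm
  have hrw2 : S d x * S (d+1) x
      = ∑ i ∈ range d, ∑ j ∈ range (d+1), x ^ ((d-1-i)+(d+1-1-j)) := by
    rw [S, S, ← sum_range_reflect (fun i => x ^ i) d,
      ← sum_range_reflect (fun j => x ^ j) (d+1), sum_mul_sum]
    exact sum_congr rfl fun i _ => sum_congr rfl fun j _ => (pow_add x _ _).symm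
  have h2 : 2 * (S d x * S (d+1) x)
      = ∑ i ∈ range d, ∑ j ∈ range (d+1), (x ^ (i+j) + x ^ ((d-1-i)+(d+1-1-j))) := by
    rw [two_mul]
    nth_rewrite 1 [hrw]
    nth_rewrite 1 [hrw2]
    rw [← sum_add_distrib]
    exact sum_congr rfl fun i _ => (sum_add_distrib).symm
  have hterm : ∀ i ∈ range d, ∀ j ∈ range (d+1),
      2 * x ^ (d-1) ≤ x ^ (i+j) + x ^ ((d-1-i)+(d+1-1-j)) := by
    intro i hi j hj
    have hi' := mem_range.mp hi
    have hj' := mem_range.mp hj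
    exact pair_pow hx (by omega)
  have hsum : ∑ i ∈ range d, ∑ j ∈ range (d+1), (2 * x ^ (d-1) : ℝ)
      ≤ ∑ i ∈ range d, ∑ j ∈ range (d+1), (x ^ (i+j) + x ^ ((d-1-i)+(d+1-1-j))) :=
    sum_le_sum fun i hi => sum_le_sum fun j hj => hterm i hi j hj
  have hconst : ∑ i ∈ range d, ∑ j ∈ range (d+1), (2 * x ^ (d-1) : ℝ)
      = (d:ℝ) * (d+1) * (2 * x ^ (d-1)) := by
    rw [sum_const, sum_const, card_range, card_range]
    push_cast
    ring
  rw [hconst] at hsum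
  rw [← h2] at hsum
  linarith

lemma ident {d : ℕ} (hd : 1 ≤ d) (x : ℝ) :
    ((d:ℝ) * S d x * D (d+1) x - ((d:ℝ)+1) * D d x * S (d+1) x) * (x-1)
      = S d x * S (d+1) x - (d:ℝ)*((d:ℝ)+1)*x^(d-1) := by
  have h1 := D_mul d x
  have h2 := D_mul (d+1) x
  have h3 := S_succ d x
  have hx : x^(d-1) * x = x^d := by rw [← pow_succ]; congr 1; omega
  simp only [Nat.add_sub_cancel] at h2
  push_cast at h2
  linear_combination ((d:ℝ) * S d x) * h2 - (((d:ℝ)+1) * S (d+1) x) * h1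
    - (d:ℝ)*((d:ℝ)+1)*x^(d-1)*h3 - (d:ℝ)*((d:ℝ)+1)*S d x * hx

lemma mono_ratio {d : ℕ} (hd : 1 ≤ d) {x : ℝ} (hx : 1 < x) :
    ((d:ℝ)+1) * D d x * S (d+1) x ≤ (d:ℝ) * S d x * D (d+1) x := by
  by_contra hcon
  push_neg at hcon
  have hA : (d:ℝ) * S d x * D (d+1) x - ((d:ℝ)+1) * D d x * S (d+1) x < 0 := by linarith
  have h5 := mul_neg_of_neg_of_pos hA (sub_pos.mpr hx)
  rw [ident hd x] at h5
  have hk := key hd hx.le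
  linarith

lemma hasDerivAt_F {d : ℕ} (hd : 1 ≤ d) {x : ℝ} (hx : 1 ≤ x) :
    HasDerivAt (F d) (((((d:ℝ)+1) * S d x ^ d * D d x) * S (d+1) x ^ d
      - S d x ^ (d+1) * ((d:ℝ) * S (d+1) x ^ (d-1) * D (d+1) x)) / (S (d+1) x ^ d) ^ 2) x := by
  have h1 : HasDerivAt (fun y => S d y ^ (d+1))
      (((d:ℝ)+1) * S d x ^ d * D d x) x := by
    have := (hasDerivAt_S d x).fun_pow (d+1)
    simpa using this
  have h2 : HasDerivAt (fun y => S (d+1) y ^ d)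
      ((d:ℝ) * S (d+1) x ^ (d-1) * D (d+1) x) x := (hasDerivAt_S (d+1) x).pow d
  exact h1.div h2 (ne_of_gt (pow_pos (S_pos (by omega) hx) d))

lemma deriv_F_nonpos {d : ℕ} (hd : 1 ≤ d) {x : ℝ} (hx : 1 < x) : deriv (F d) x ≤ 0 := by
  rw [(hasDerivAt_F hd hx.le).deriv]
  apply div_nonpos_of_nonpos_of_nonneg _ (sq_nonneg _)
  have hfac : S (d+1) x ^ d = S (d+1) x ^ (d-1) * S (d+1) x := by
    rw [← pow_succ]; congr 1; omega
  have hS := S_pos hd hx.le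
  have hS1 := S_pos (n := d+1) (by omega) hx.le
  have h1 : (0:ℝ) ≤ S d x ^ d := pow_nonneg hS.le d
  have h2 : (0:ℝ) ≤ S (d+1) x ^ (d-1) := pow_nonneg hS1.le _
  have hm := mono_ratio hd hx
  calc (((d:ℝ)+1) * S d x ^ d * D d x) * S (d+1) x ^ d
        - S d x ^ (d+1) * ((d:ℝ) * S (d+1) x ^ (d-1) * D (d+1) x)
      = S d x ^ d * S (d+1) x ^ (d-1) *
        ((((d:ℝ)+1) * D d x * S (d+1) x) - (d:ℝ) * S d x * D (d+1) x) := by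
        rw [hfac, pow_succ]; ring
  _ ≤ 0 := mul_nonpos_of_nonneg_of_nonpos (mul_nonneg h1 h2) (by linarith)

lemma F_antitone {d : ℕ} (hd : 1 ≤ d) : AntitoneOn (F d) (Set.Ici 1) := by
  have hdiff : ∀ x ∈ Set.Ici (1:ℝ), DifferentiableAt ℝ (F d) x := fun x hx =>
    (hasDerivAt_F hd hx).differentiableAt
  apply antitoneOn_of_deriv_nonpos (convex_Ici 1)
  · exact fun x hx => (hdiff x hx).continuousAt.continuousWithinAt
  · intro x hx
    rw [interior_Ici] at hx
    exact (hdiff x (Set.mem_Ioi.mp hx).le).differentiableWithinAt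
  · intro x hx
    rw [interior_Ici] at hx
    exact deriv_F_nonpos hd hx

lemma S_lt {n : ℕ} (hn : 2 ≤ n) {x y : ℝ} (hx : 1 ≤ x) (hxy : x < y) : S n x < S n y := by
  apply sum_lt_sum
  · exact fun i _ => pow_le_pow_left₀ (by linarith) hxy.le i
  · exact ⟨1, mem_range.mpr (by omega), by simpa using hxy⟩

lemma phi_lt {q d : ℕ} (hq : 4 ≤ q) (hd : 1 ≤ d) {x y : ℝ} (hx : 1 ≤ x) (hxy : x < y) :
    phi q d y < phi q d x := by
  have hF : F d y ≤ F d x := F_antitone hd (by simp [hx]) (by simp; linarith) hxy.le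
  have hdR : (1:ℝ) ≤ d := by exact_mod_cast hd
  have hSx : (2:ℝ) ≤ S (d+1) x := by
    have h5 := S_ge (n := d+1) hx
    push_cast at h5
    linarith
  have hSy : S (d+1) x < S (d+1) y := S_lt (by omega) hx hxy
  have hinvx : 0 < 1 - 1/S (d+1) x := by
    rw [sub_pos, div_lt_one (by linarith)]
    linarith
  have hlt : 1 - 1/S (d+1) x < 1 - 1/S (d+1) y := by
    have : 1/S (d+1) y < 1/S (d+1) x :=
      one_div_lt_one_div_of_lt (by linarith) hSy
    linarith
  have hpow : (1 - 1/S (d+1) x)^d < (1 - 1/S (d+1) y)^d :=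
    pow_lt_pow_left₀ hlt hinvx.le (by omega)
  have hq3 : (3:ℝ) ≤ (q:ℝ) - 1 := by
    have : (4:ℝ) ≤ q := by exact_mod_cast hq
    linarith
  have := mul_lt_mul_of_pos_left hpow (show (0:ℝ) < (q:ℝ)-1 by linarith)
  unfold phi
  linarith

lemma h2_eq {q k d : ℕ} (hd : 1 ≤ d) {x : ℝ} (hx : 1 < x) :
    h2 q k d x = (S (d+1) x / S d x)^d * ((q:ℝ)^k - q) - S d x + ((q:ℝ)-1) * x^d := by
  have hx1 : x - 1 ≠ 0 := by linarith
  have hS : S d x ≠ 0 := (S_pos hd hx.le).ne'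
  have e1 : x ^ (d+1) - 1 = S (d+1) x * (x-1) := (S_geom (d+1) x).symm
  have e2 : x ^ d - 1 = S d x * (x-1) := (S_geom d x).symm
  unfold h2
  rw [e1, e2]
  rw [mul_div_mul_right _ _ hx1, mul_div_assoc, div_self hx1, mul_one]

lemma h1_eq {q k d : ℕ} (hd : 1 ≤ d) {x : ℝ} (hx : 1 < x) :
    h1 q k d x = (S (d+1) x / S d x)^d * ((q:ℝ)^k - q) - S d x + (q:ℝ) - x^d := by
  have hx1 : x - 1 ≠ 0 := by linarith
  have hS : S d x ≠ 0 := (S_pos hd hx.le).ne'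
  have e1 : x ^ (d+1) - 1 = S (d+1) x * (x-1) := (S_geom (d+1) x).symm
  have e2 : x ^ d - 1 = S d x * (x-1) := (S_geom d x).symm
  unfold h1
  rw [e1, e2]
  rw [mul_div_mul_right _ _ hx1, mul_div_assoc, div_self hx1, mul_one]

lemma h2_factor {q k d : ℕ} (hd : 1 ≤ d) {x : ℝ} (hx : 1 < x) :
    h2 q k d x = (S (d+1) x / S d x)^d * (((q:ℝ)^k - q) - phi q d x) := by
  have hS : (0:ℝ) < S d x := S_pos hd hx.le
  have hS1 : (0:ℝ) < S (d+1) x := S_pos (by omega) hx.le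
  have key1 : (S (d+1) x / S d x)^d * F d x = S d x := by
    unfold F
    rw [div_pow, pow_succ]; field_simp
  have key2 : (S (d+1) x / S d x)^d * (1 - 1/S (d+1) x)^d = x^d := by
    rw [← mul_pow]
    congr 1
    rw [S_succ]
    field_simp
    ring
  rw [h2_eq hd hx]
  unfold phi
  linear_combination key1 - ((q:ℝ)-1) * key2

lemma h1_eq_h2 (q k d : ℕ) (x : ℝ) : h1 q k d x = h2 q k d x - q * (x^d - 1) := by
  unfold h1 h2; ring

section Main
variable {q k d : ℕ} (hq : 4 ≤ q) (hk : 2 ≤ k) (hd3 : 3 * q ^ k ≤ d)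

include hq hk in
lemma Q16 : (16:ℝ) ≤ (q:ℝ)^k := by
  have h1 : (4:ℝ) ≤ q := by exact_mod_cast hq
  calc (16:ℝ) = 4^2 := by norm_num
  _ ≤ (q:ℝ)^2 := by nlinarith
  _ ≤ (q:ℝ)^k := pow_le_pow_right₀ (by linarith) hk

include hq hk hd3 in
lemma d48 : 48 ≤ d := by
  have h5 : 4^2 ≤ q^k := by
    calc 4^2 ≤ q^2 := Nat.pow_le_pow_left hq 2
    _ ≤ q^k := Nat.pow_le_pow_right (by omega) hk
  omega

include hq hk in
lemma K12 : (12:ℝ) ≤ (q:ℝ)^k - q := by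
  have h1 : (4:ℝ) ≤ q := by exact_mod_cast hq
  have h2 : (q:ℝ)^2 ≤ (q:ℝ)^k := pow_le_pow_right₀ (by linarith) hk
  nlinarith

include hq hk hd3 in
lemma h2c_neg : h2 q k d (1 + 1/(d:ℝ)^2) < 0 := by
  set c : ℝ := 1 + 1/(d:ℝ)^2 with hc
  clear_value c
  have hd48 := d48 hq hk hd3
  have hdR : (48:ℝ) ≤ (d:ℝ) := by exact_mod_cast hd48
  have hc1 : 1 < c := by
    rw [hc]
    have : (0:ℝ) < 1/(d:ℝ)^2 := by positivity
    linarith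
  have hd1 : (1:ℕ) ≤ d := by omega
  have hS : (0:ℝ) < S d c := S_pos hd1 hc1.le
  have hSd : (d:ℝ) ≤ S d c := S_ge hc1.le
  have hratio : S (d+1) c / S d c ≤ 1 + (1/(d:ℝ) + 1/(d:ℝ)^2) := by
    have h1 : S (d+1) c / S d c = c + 1/S d c := by
      rw [S_succ]; field_simp
    have h2 : 1/S d c ≤ 1/(d:ℝ) := by
      apply one_div_le_one_div_of_le (by linarith) hSd
    rw [h1]; linarith
  have hrnonneg : 0 ≤ S (d+1) c / S d c := div_nonneg (S_pos (by omega) hc1.le).le hS.le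
  have hrpow : (S (d+1) c / S d c)^d ≤ Real.exp (1 + 1/(d:ℝ)) := by
    calc (S (d+1) c / S d c)^d ≤ (1 + (1/(d:ℝ) + 1/(d:ℝ)^2))^d :=
          pow_le_pow_left₀ hrnonneg hratio d
    _ ≤ (Real.exp (1/(d:ℝ) + 1/(d:ℝ)^2))^d := by
          apply pow_le_pow_left₀ (by positivity)
          linarith [Real.add_one_le_exp (1/(d:ℝ) + 1/(d:ℝ)^2)]
    _ = Real.exp ((d:ℝ) * (1/(d:ℝ) + 1/(d:ℝ)^2)) := by
          rw [← Real.exp_nat_mul]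
    _ = Real.exp (1 + 1/(d:ℝ)) := by
          congr 1; field_simp
  have hexp48 : Real.exp (1/(48:ℝ)) ≤ 48/47 := by
    have h1 := Real.add_one_le_exp (-(1/48) : ℝ)
    have h2 : Real.exp (-(1/48):ℝ) = (Real.exp (1/48))⁻¹ := Real.exp_neg _
    have h3 : (0:ℝ) < Real.exp (1/48) := Real.exp_pos _
    rw [h2, inv_eq_one_div] at h1
    have h4 : (47/48:ℝ) ≤ 1/Real.exp (1/48) := by linarith
    rw [le_div_iff₀ h3] at h4
    linarith
  have hexp : Real.exp (1 + 1/(d:ℝ)) ≤ 2.8 := by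
    have h1 : (1:ℝ) + 1/(d:ℝ) ≤ 1 + 1/48 := by
      have : 1/(d:ℝ) ≤ 1/48 := one_div_le_one_div_of_le (by norm_num) hdR
      linarith
    calc Real.exp (1 + 1/(d:ℝ)) ≤ Real.exp (1 + 1/48) := Real.exp_le_exp.mpr h1
    _ = Real.exp 1 * Real.exp (1/48) := by rw [← Real.exp_add]
    _ ≤ 2.7182818286 * (48/47) := by
        apply mul_le_mul Real.exp_one_lt_d9.le hexp48 (Real.exp_pos _).le (by norm_num)
    _ ≤ 2.8 := by norm_num
  have hcd : c^d ≤ 1.03 := by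
    calc c^d ≤ (Real.exp (1/(d:ℝ)^2))^d := by
          apply pow_le_pow_left₀ (by positivity)
          rw [hc]
          linarith [Real.add_one_le_exp (1/(d:ℝ)^2)]
    _ = Real.exp ((d:ℝ) * (1/(d:ℝ)^2)) := by rw [← Real.exp_nat_mul]
    _ = Real.exp (1/(d:ℝ)) := by congr 1; field_simp
    _ ≤ Real.exp (1/48) := Real.exp_le_exp.mpr (by
          apply one_div_le_one_div_of_le (by norm_num) hdR)
    _ ≤ 48/47 := hexp48
    _ ≤ 1.03 := by norm_num
  have hQ := Q16 hq hk
  have hdQ : 3 * (q:ℝ)^k ≤ (d:ℝ) := by exact_mod_cast hd3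
  have hq4 : (4:ℝ) ≤ (q:ℝ) := by exact_mod_cast hq
  have hqk : (q:ℝ) ≤ (q:ℝ)^k := le_self_pow₀ (by linarith) (by omega)
  have hKpos : (0:ℝ) ≤ (q:ℝ)^k - q := by linarith
  rw [h2_eq hd1 hc1]
  have hb1 : (S (d+1) c / S d c)^d * ((q:ℝ)^k - q) ≤ 2.8 * ((q:ℝ)^k - q) := by
    apply mul_le_mul_of_nonneg_right _ hKpos
    linarith
  have hb2 : ((q:ℝ)-1) * c^d ≤ ((q:ℝ)-1) * 1.03 :=
    mul_le_mul_of_nonneg_left hcd (by linarith)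
  nlinarith

include hq hk hd3 in
lemma h1_pos3 : 0 < h1 q k d 3 := by
  have hd48 := d48 hq hk hd3
  have hd1 : (1:ℕ) ≤ d := by omega
  have h13 : (1:ℝ) < 3 := by norm_num
  have hS : (0:ℝ) < S d 3 := S_pos hd1 (by norm_num)
  have hSval : S d 3 = ((3:ℝ)^d - 1)/2 := by
    have := S_geom d (3:ℝ)
    field_simp at this ⊢
    linarith
  have hratio : (3:ℝ) ≤ S (d+1) 3 / S d 3 := by
    rw [S_succ]
    rw [le_div_iff₀ hS]
    linarith
  have hrpow : (3:ℝ)^d ≤ (S (d+1) 3 / S d 3)^d :=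
    pow_le_pow_left₀ (by norm_num) hratio d
  have hK := K12 hq hk
  have hP : (0:ℝ) < 3^d := by positivity
  rw [h1_eq hd1 h13]
  have hq0 : (0:ℝ) ≤ q := by positivity
  have hb : (3:ℝ)^d * 12 ≤ (S (d+1) 3 / S d 3)^d * ((q:ℝ)^k - q) := by
    apply mul_le_mul hrpow hK (by norm_num) (by positivity)
  nlinarith

include hq hk hd3 in
lemma upcross {x₁ x₂ : ℝ} (hx1 : 1 < x₁) (h12 : x₁ < x₂) (hh : h2 q k d x₂ ≤ 0) :
    h2 q k d x₁ < 0 := by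
  have hd1 : (1:ℕ) ≤ d := by have := d48 hq hk hd3; omega
  have hx2 : 1 < x₂ := hx1.trans h12
  have hpos2 : (0:ℝ) < (S (d+1) x₂ / S d x₂)^d :=
    pow_pos (div_pos (S_pos (by omega) hx2.le) (S_pos hd1 hx2.le)) d
  have hpos1 : (0:ℝ) < (S (d+1) x₁ / S d x₁)^d :=
    pow_pos (div_pos (S_pos (by omega) hx1.le) (S_pos hd1 hx1.le)) d
  rw [h2_factor hd1 hx2] at hh
  have hKφ : ((q:ℝ)^k - q) - phi q d x₂ ≤ 0 := by
    by_contra hcon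
    push_neg at hcon
    nlinarith
  have hφ : phi q d x₂ < phi q d x₁ := phi_lt hq hd1 hx1.le h12
  rw [h2_factor hd1 hx1]
  apply mul_neg_of_pos_of_neg hpos1
  linarith

end Main

end Stmt8Aux

open Stmt8Aux in
/-- For all integers `q ≥ 4`, `k ≥ 2` and `d ≥ 3q^k`, the function `h1` has a smallest root
`x*` in `(1, ∞)`, it satisfies `h1(x) < 0` for `x ∈ (1, x*)`, `x*` is larger than any root
`x**` of `h2` in `(1, ∞)`, and `h2(x*) > 0`. -/
theorem stmt8 (q k d : ℕ) (hq : 4 ≤ q) (hk : 2 ≤ k) (hd : 3 * q ^ k ≤ d) :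
    ∃ xstar : ℝ, 1 < xstar ∧ h1 q k d xstar = 0 ∧
      (∀ x : ℝ, 1 < x → h1 q k d x = 0 → xstar ≤ x) ∧
      (∀ x : ℝ, 1 < x → x < xstar → h1 q k d x < 0) ∧
      (∀ xss : ℝ, 1 < xss → h2 q k d xss = 0 → xss < xstar) ∧
      0 < h2 q k d xstar := by
  have hd48 := d48 hq hk hd
  have hd1 : (1:ℕ) ≤ d := by omega
  have hdR : (48:ℝ) ≤ (d:ℝ) := by exact_mod_cast hd48
  set c : ℝ := 1 + 1/(d:ℝ)^2 with hc
  have hc1 : 1 < c := by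
    have : (0:ℝ) < 1/(d:ℝ)^2 := by positivity
    rw [hc]; linarith
  have hc3 : c < 3 := by
    have h5 : 1/(d:ℝ)^2 ≤ 1 := by
      rw [div_le_one (by positivity)]
      nlinarith
    rw [hc]; linarith
  have hq0 : (0:ℝ) < q := by
    have : (4:ℝ) ≤ q := by exact_mod_cast hq
    linarith
  -- h1 < h2 on (1, ∞)
  have hlt : ∀ x : ℝ, 1 < x → h1 q k d x < h2 q k d x := by
    intro x hx
    rw [h1_eq_h2]
    have hxd : 1 < x^d := one_lt_pow₀ hx (by omega)
    nlinarith
  -- h1 is negative on (1, c]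
  have hneg_c : ∀ x : ℝ, 1 < x → x ≤ c → h1 q k d x < 0 := by
    intro x hx hxc
    have hh2 : h2 q k d x < 0 := by
      rcases eq_or_lt_of_le hxc with h | h
      · rw [h]; exact h2c_neg hq hk hd
      · exact upcross hq hk hd hx h (h2c_neg hq hk hd).le
    linarith [hlt x hx]
  -- continuity of h1 on [c, 3]
  have hcont : ContinuousOn (h1 q k d) (Set.Icc c 3) := by
    have hsub : Set.Icc c 3 ⊆ {x : ℝ | 1 < x} := fun x hx => lt_of_lt_of_le hc1 hx.1
    apply ContinuousOn.mono _ hsub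
    unfold h1
    apply ContinuousOn.sub
    apply ContinuousOn.add
    apply ContinuousOn.sub
    · apply ContinuousOn.mul _ continuousOn_const
      apply ContinuousOn.pow
      apply ContinuousOn.div
      · exact ((continuous_pow (d+1)).sub continuous_const).continuousOn
      · exact ((continuous_pow d).sub continuous_const).continuousOn
      · intro x hx
        have : (1:ℝ) < x^d := one_lt_pow₀ hx (by omega)
        simp only [Set.mem_setOf_eq] at hx ⊢
        intro hcon
        rw [sub_eq_zero] at hcon
        rw [hcon] at this
        linarith
    · apply ContinuousOn.div
      · exact ((continuous_pow d).sub continuous_const).continuousOn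
      · exact (continuous_id.sub continuous_const).continuousOn
      · intro x hx
        simp only [Set.mem_setOf_eq] at hx
        intro hcon
        rw [sub_eq_zero] at hcon
        rw [hcon] at hx
        exact lt_irrefl _ hx
    · exact continuousOn_const
    · exact (continuous_pow d).continuousOn
  -- IVT: h1 has a root in [c, 3]
  have hc_neg : h1 q k d c < 0 := hneg_c c hc1 le_rfl
  have h3_pos : 0 < h1 q k d 3 := h1_pos3 hq hk hd
  have hivt := intermediate_value_Icc hc3.le hcont
  have h0mem : (0:ℝ) ∈ Set.Icc (h1 q k d c) (h1 q k d 3) := ⟨hc_neg.le, h3_pos.le⟩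
  obtain ⟨x₀, hx₀I, hx₀⟩ := hivt h0mem
  -- the set of roots in [c, 3]
  set T : Set ℝ := Set.Icc c 3 ∩ h1 q k d ⁻¹' {0} with hT
  have hTne : T.Nonempty := ⟨x₀, hx₀I, by simpa using hx₀⟩
  have hTclosed : IsClosed T := hcont.preimage_isClosed_of_isClosed isClosed_Icc isClosed_singleton
  have hTcomp : IsCompact T := isCompact_Icc.of_isClosed_subset hTclosed Set.inter_subset_left
  set xstar := sInf T with hxs
  have hxmem : xstar ∈ T := hTcomp.sInf_mem hTne
  obtain ⟨⟨hxc, hx3⟩, hxroot⟩ := hxmem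
  have hx1 : 1 < xstar := lt_of_lt_of_le hc1 hxc
  have hxroot' : h1 q k d xstar = 0 := by simpa using hxroot
  -- minimality
  have hmin : ∀ x : ℝ, 1 < x → h1 q k d x = 0 → xstar ≤ x := by
    intro x hx hroot
    rcases le_or_gt x 3 with h3 | h3
    · have hcx : c ≤ x := by
        by_contra hcon
        push_neg at hcon
        exact absurd hroot (hneg_c x hx hcon.le).ne
      exact csInf_le hTcomp.bddBelow ⟨⟨hcx, h3⟩, by simpa using hroot⟩
    · linarith
  refine ⟨xstar, hx1, hxroot', hmin, ?_, ?_, ?_⟩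
  · -- negativity on (1, xstar)
    intro x hx hxlt
    rcases le_or_gt x c with hxc' | hxc'
    · exact hneg_c x hx hxc'
    · rcases lt_trichotomy (h1 q k d x) 0 with h | h | h
      · exact h
      · exact absurd (hmin x hx h) (not_le.mpr hxlt)
      · exfalso
        have hxle3 : x ≤ 3 := by linarith
        have hcont' : ContinuousOn (h1 q k d) (Set.Icc c x) :=
          hcont.mono (Set.Icc_subset_Icc le_rfl hxle3)
        have hivt2 := intermediate_value_Icc hxc'.le hcont'
        obtain ⟨y, hyI, hy⟩ := hivt2 ⟨hc_neg.le, h.le⟩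
        have hy1 : 1 < y := lt_of_lt_of_le hc1 hyI.1
        have := hmin y hy1 (by simpa using hy)
        have : xstar ≤ x := le_trans this hyI.2
        linarith
  · -- h2 roots are below xstar
    intro xss hxss hzero
    by_contra hcon
    push_neg at hcon
    rcases eq_or_lt_of_le hcon with heq | hlt'
    · have h2pos : 0 < h2 q k d xstar := by
        rw [h1_eq_h2] at hxroot'
        have hxd : 1 < xstar^d := one_lt_pow₀ hx1 (by omega)
        nlinarith
      rw [← heq] at hzero
      linarith
    · have := upcross hq hk hd hx1 hlt' hzero.le
      rw [h1_eq_h2] at hxroot'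
      have hxd : 1 < xstar^d := one_lt_pow₀ hx1 (by omega)
      nlinarith
  · -- h2 positive at xstar
    rw [h1_eq_h2] at hxroot'
    have hxd : 1 < xstar^d := one_lt_pow₀ hx1 (by omega)
    nlinarith
end

section
/- Let q ≥ 2 and k ≥ 2 be integers with q^k − q > 1, and let d ≥ 1 be an integer. For all reals x > 1 and y > 1: if f1(x, y) = 0 then x < 1 + 1/(q^k − q − 1), and if f2(x, y) = 0 then y < 1 + 1/(q^k − q − 1). -/
/-- `f1(x,y) = (x−1)·[(1 + x^d(y−1)/(x^d−1))^d·(q^k−q) + q − y^d] − y^d + 1`. -/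
noncomputable def f1 (q k d : ℕ) (x y : ℝ) : ℝ :=
  (x - 1) * ((1 + x ^ d * (y - 1) / (x ^ d - 1)) ^ d * ((q : ℝ) ^ k - q)
    + (q : ℝ) - y ^ d) - y ^ d + 1

/-- `f2(x,y) = (y−1)·[(1 + y^d(x−1)/(y^d−1))^d·(q^k−q) + (q−1)·x^d] − x^d + 1`. -/
noncomputable def f2 (q k d : ℕ) (x y : ℝ) : ℝ :=
  (y - 1) * ((1 + y ^ d * (x - 1) / (y ^ d - 1)) ^ d * ((q : ℝ) ^ k - q)
    + ((q : ℝ) - 1) * x ^ d) - x ^ d + 1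


/-- Let `q ≥ 2` and `k ≥ 2` be integers with `q^k − q > 1`, and `d ≥ 1` an integer. For all
reals `x, y > 1`: if `f1(x, y) = 0` then `x < 1 + 1/(q^k − q − 1)`, and if `f2(x, y) = 0`
then `y < 1 + 1/(q^k − q − 1)`. -/
theorem stmt9 (q k d : ℕ) (hq : 2 ≤ q) (hk : 2 ≤ k) (hqk : q + 1 < q ^ k)
    (hd : 1 ≤ d) (x y : ℝ) (hx : 1 < x) (hy : 1 < y) :
    (f1 q k d x y = 0 → x < 1 + 1 / ((q : ℝ) ^ k - q - 1)) ∧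
    (f2 q k d x y = 0 → y < 1 + 1 / ((q : ℝ) ^ k - q - 1)) := by
  have hq2 : (2 : ℝ) ≤ (q : ℝ) := by exact_mod_cast hq
  have hT : (1 : ℝ) < (q : ℝ) ^ k - q := by
    have : ((q : ℝ) + 1) < (q : ℝ) ^ k := by exact_mod_cast hqk
    linarith
  have hT1 : (0 : ℝ) < (q : ℝ) ^ k - q - 1 := by linarith
  have hd0 : d ≠ 0 := by omega
  have hxd : 1 < x ^ d := one_lt_pow₀ hx hd0
  have hyd : 1 < y ^ d := one_lt_pow₀ hy hd0
  constructor
  · intro hf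
    have hbase : y ≤ 1 + x ^ d * (y - 1) / (x ^ d - 1) := by
      have h1 : y - 1 ≤ x ^ d * (y - 1) / (x ^ d - 1) := by
        rw [le_div_iff₀ (by linarith)]
        nlinarith
      linarith
    have hpow : y ^ d ≤ (1 + x ^ d * (y - 1) / (x ^ d - 1)) ^ d :=
      pow_le_pow_left₀ (by linarith) hbase d
    unfold f1 at hf
    set B := (1 + x ^ d * (y - 1) / (x ^ d - 1)) ^ d with hB
    have key : (x - 1) * ((q : ℝ) ^ k - q - 1) < 1 := by
      nlinarith [mul_nonneg (le_of_lt (sub_pos.mpr hx))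
        (mul_nonneg (sub_nonneg.mpr hpow) (by linarith : (0:ℝ) ≤ (q:ℝ)^k - q)),
        mul_pos (sub_pos.mpr hx) (by linarith : (0:ℝ) < (q:ℝ)), hyd]
    have := (lt_div_iff₀ hT1).mpr key
    linarith
  · intro hf
    have hbase : x ≤ 1 + y ^ d * (x - 1) / (y ^ d - 1) := by
      have h1 : x - 1 ≤ y ^ d * (x - 1) / (y ^ d - 1) := by
        rw [le_div_iff₀ (by linarith)]
        nlinarith
      linarith
    have hpow : x ^ d ≤ (1 + y ^ d * (x - 1) / (y ^ d - 1)) ^ d :=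
      pow_le_pow_left₀ (by linarith) hbase d
    unfold f2 at hf
    set B := (1 + y ^ d * (x - 1) / (y ^ d - 1)) ^ d with hB
    have key : (y - 1) * ((q : ℝ) ^ k - q - 1) < 1 := by
      nlinarith [mul_nonneg (le_of_lt (sub_pos.mpr hy))
        (mul_nonneg (sub_nonneg.mpr hpow) (by linarith : (0:ℝ) ≤ (q:ℝ)^k - q)),
        mul_nonneg (le_of_lt (sub_pos.mpr hy))
        (mul_nonneg (by linarith : (0:ℝ) ≤ (q:ℝ) - 1) (by linarith : (0:ℝ) ≤ x^d)),
        hxd]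
    have := (lt_div_iff₀ hT1).mpr key
    linarith
end

section
/- Let q ≥ 4 and k ≥ 2 be integers and d ≥ 3q^k an integer. The function g(x) := (x^d − 1)^d / ((x^{d+1} − 1)^{d−1}·(x − 1)) is strictly decreasing on (1, ∞), and there is a unique x_0 ∈ (1, ∞) such that g(x_0) = q^k − q; moreover g(x) > q^k − q for all x ∈ (1, x_0). -/
/-- `g(x) = (x^d − 1)^d / ((x^{d+1} − 1)^{d−1}·(x − 1))`. -/
noncomputable def gfun (d : ℕ) (x : ℝ) : ℝ :=
  (x ^ d - 1) ^ d / ((x ^ (d + 1) - 1) ^ (d - 1) * (x - 1))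

open Filter Set Topology

lemma pair_aux (x : ℝ) (hx : 1 ≤ x) {a b c : ℕ} (hac : a ≤ c) (h : a + b = 2 * c) :
    2 * x ^ c ≤ x ^ a + x ^ b := by
  have hx0 : (0:ℝ) ≤ x := le_trans zero_le_one hx
  have h2 : x ^ c = x ^ a * x ^ (c - a) := by rw [← pow_add]; congr 1; omega
  have h3 : x ^ b = x ^ a * (x ^ (c - a)) ^ 2 := by rw [← pow_mul, ← pow_add]; congr 1; omega
  nlinarith [mul_nonneg (pow_nonneg hx0 a) (sq_nonneg (x ^ (c - a) - 1))]

lemma pair_lem (x : ℝ) (hx : 1 ≤ x) {a b c : ℕ} (h : a + b = 2 * c) :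
    2 * x ^ c ≤ x ^ a + x ^ b := by
  rcases le_total a c with h1 | h1
  · exact pair_aux x hx h1 h
  · have hb : b ≤ c := by omega
    have := pair_aux x hx hb (by omega : b + a = 2 * c)
    linarith

/-- AM-GM for the geometric sum: `(d x^{(d-1)/2})^2 < S^2`. -/
lemma sq_geom_gt (m : ℕ) (x : ℝ) (hx : 1 < x) :
    ((m : ℝ) + 2) ^ 2 * x ^ (m + 1) < (∑ i ∈ Finset.range (m + 2), x ^ i) ^ 2 := by
  have hx1 : (1:ℝ) ≤ x := le_of_lt hx
  set S := ∑ i ∈ Finset.range (m + 2), x ^ i with hS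
  have hS2 : S ^ 2 = ∑ p ∈ Finset.range (m + 2) ×ˢ Finset.range (m + 2), x ^ (p.1 + p.2) := by
    rw [sq, Finset.sum_mul_sum, Finset.sum_product]
    simp [pow_add]
  have hrefl : S = ∑ i ∈ Finset.range (m + 2), x ^ (m + 1 - i) :=
    (Finset.sum_range_reflect (fun i => x ^ i) (m + 2)).symm
  have hS2' : S ^ 2 = ∑ p ∈ Finset.range (m + 2) ×ˢ Finset.range (m + 2),
      x ^ ((m + 1 - p.1) + (m + 1 - p.2)) := by
    rw [sq, hrefl, Finset.sum_mul_sum, Finset.sum_product]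
    simp [pow_add]
  have key : ∑ p ∈ Finset.range (m + 2) ×ˢ Finset.range (m + 2), 2 * x ^ (m + 1) <
      ∑ p ∈ Finset.range (m + 2) ×ˢ Finset.range (m + 2),
        (x ^ (p.1 + p.2) + x ^ ((m + 1 - p.1) + (m + 1 - p.2))) := by
    apply Finset.sum_lt_sum
    · intro p hp
      simp only [Finset.mem_product, Finset.mem_range] at hp
      exact pair_lem x hx1 (by omega)
    · refine ⟨(0, 0), by simp, ?_⟩
      simp only [Nat.add_zero, Nat.zero_add, Nat.sub_zero, pow_zero]
      have h1 : x ^ (m + 1 + (m + 1)) = (x ^ (m + 1)) ^ 2 := by rw [← pow_mul]; ring_nf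
      have h2 : (0:ℝ) < (x ^ (m + 1) - 1) ^ 2 := by
        have h3 : (1:ℝ) < x ^ (m + 1) := one_lt_pow₀ hx (Nat.succ_ne_zero m)
        nlinarith
      nlinarith
  have hconst : ∑ _p ∈ Finset.range (m + 2) ×ˢ Finset.range (m + 2), 2 * x ^ (m + 1)
      = ((m : ℝ) + 2) ^ 2 * (2 * x ^ (m + 1)) := by
    rw [Finset.sum_const, Finset.card_product, Finset.card_range]
    push_cast
    ring
  have hsum : ∑ p ∈ Finset.range (m + 2) ×ˢ Finset.range (m + 2),
      (x ^ (p.1 + p.2) + x ^ ((m + 1 - p.1) + (m + 1 - p.2))) = 2 * S ^ 2 := by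
    rw [Finset.sum_add_distrib, ← hS2, ← hS2']; ring
  rw [hconst, hsum] at key
  linarith

/-- The derivative of `gfun`. -/
lemma gfun_hasDeriv (m : ℕ) (x : ℝ) (hx : 1 < x) :
    HasDerivAt (gfun (m + 2))
      (-(((x ^ (m + 2) - 1) ^ 2 - ((m : ℝ) + 2) ^ 2 * x ^ (m + 1) * (x - 1) ^ 2)
          * (x ^ (m + 2) - 1) ^ (m + 1)
        / ((x ^ (m + 3) - 1) ^ (m + 2) * (x - 1) ^ 2))) x := by
  have hx0 : (0:ℝ) < x := lt_trans one_pos hx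
  have hu : (0:ℝ) < x ^ (m + 2) - 1 := sub_pos.mpr (one_lt_pow₀ hx (by omega))
  have hv : (0:ℝ) < x ^ (m + 3) - 1 := sub_pos.mpr (one_lt_pow₀ hx (by omega))
  have hw : (0:ℝ) < x - 1 := sub_pos.mpr hx
  have hN : HasDerivAt (fun y : ℝ => (y ^ (m + 2) - 1) ^ (m + 2))
      ((↑(m + 2) : ℝ) * (x ^ (m + 2) - 1) ^ (m + 1) * ((↑(m + 2) : ℝ) * x ^ (m + 1))) x := by
    have h1 : HasDerivAt (fun y : ℝ => y ^ (m + 2) - 1) ((↑(m + 2) : ℝ) * x ^ (m + 1)) x := by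
      simpa using (hasDerivAt_pow (m + 2) x).sub_const 1
    simpa using h1.fun_pow (m + 2)
  have hV : HasDerivAt (fun y : ℝ => (y ^ (m + 3) - 1) ^ (m + 1))
      ((↑(m + 1) : ℝ) * (x ^ (m + 3) - 1) ^ m * ((↑(m + 3) : ℝ) * x ^ (m + 2))) x := by
    have h1 : HasDerivAt (fun y : ℝ => y ^ (m + 3) - 1) ((↑(m + 3) : ℝ) * x ^ (m + 2)) x := by
      simpa using (hasDerivAt_pow (m + 3) x).sub_const 1
    simpa using h1.fun_pow (m + 1)
  have hw' : HasDerivAt (fun y : ℝ => y - 1) 1 x := (hasDerivAt_id x).sub_const 1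
  have hD : HasDerivAt (fun y : ℝ => (y ^ (m + 3) - 1) ^ (m + 1) * (y - 1))
      ((↑(m + 1) : ℝ) * (x ^ (m + 3) - 1) ^ m * ((↑(m + 3) : ℝ) * x ^ (m + 2)) * (x - 1)
        + (x ^ (m + 3) - 1) ^ (m + 1) * 1) x := hV.mul hw'
  have hDne : (x ^ (m + 3) - 1) ^ (m + 1) * (x - 1) ≠ 0 := by positivity
  have hq := hN.fun_div hD hDne
  have hgf : gfun (m + 2)
      = fun y : ℝ => (y ^ (m + 2) - 1) ^ (m + 2) / ((y ^ (m + 3) - 1) ^ (m + 1) * (y - 1)) := rfl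
  rw [hgf]
  convert hq using 1
  · rfl
  · rfl
  have hvne : (x ^ (m + 3) - 1) ≠ 0 := ne_of_gt hv
  have hwne : (x - 1) ≠ 0 := ne_of_gt hw
  rw [← neg_div, div_eq_div_iff (by positivity) (by positivity)]
  push_cast
  ring

lemma slope_tendsto (n : ℕ) :
    Tendsto (fun y : ℝ => (y ^ n - 1) / (y - 1)) (𝓝[>] (1:ℝ)) (𝓝 (n : ℝ)) := by
  have h := hasDerivAt_pow n (1:ℝ)
  rw [hasDerivAt_iff_tendsto_slope] at h
  have hsub : Set.Ioi (1:ℝ) ⊆ {(1:ℝ)}ᶜ := fun y hy => ne_of_gt hy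
  have h2 := h.mono_left (nhdsWithin_mono _ hsub)
  have h3 : (fun y : ℝ => (y ^ n - 1) / (y - 1)) = slope (fun y : ℝ => y ^ n) 1 := by
    funext y
    simp [slope_def_field]
  rw [h3]
  simpa using h2

lemma gfun_tendsto (m : ℕ) :
    Tendsto (gfun (m + 2)) (𝓝[>] (1:ℝ))
      (𝓝 ((↑(m + 2) : ℝ) ^ (m + 2) / (↑(m + 3) : ℝ) ^ (m + 1))) := by
  have h1 := (slope_tendsto (m + 2)).pow (m + 2)
  have h2 := (slope_tendsto (m + 3)).pow (m + 1)
  have hne : ((↑(m + 3) : ℝ)) ^ (m + 1) ≠ 0 := by positivity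
  have h3 := h1.div h2 hne
  apply h3.congr'
  filter_upwards [self_mem_nhdsWithin] with y hy
  have hy1 : (1:ℝ) < y := hy
  have hwne : y - 1 ≠ 0 := ne_of_gt (sub_pos.mpr hy1)
  have hgf : gfun (m + 2) y
      = (y ^ (m + 2) - 1) ^ (m + 2) / ((y ^ (m + 3) - 1) ^ (m + 1) * (y - 1)) := rfl
  have hvne : y ^ (m + 3) - 1 ≠ 0 :=
    ne_of_gt (sub_pos.mpr (one_lt_pow₀ hy1 (by omega)))
  simp only [Pi.div_apply]
  rw [hgf, div_pow, div_pow]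
  field_simp
  ring

/-- Let `q ≥ 4` and `k ≥ 2` be integers and `d ≥ 3q^k` an integer. Then `g` is strictly
decreasing on `(1, ∞)`, there is a unique `x_0 ∈ (1, ∞)` with `g(x_0) = q^k − q`, and
`g(x) > q^k − q` for all `x ∈ (1, x_0)`. -/
theorem stmt10 (q k d : ℕ) (hq : 4 ≤ q) (hk : 2 ≤ k) (hd : 3 * q ^ k ≤ d) :
    StrictAntiOn (gfun d) (Set.Ioi 1) ∧
    ∃ x0 : ℝ, (1 < x0 ∧ gfun d x0 = (q : ℝ) ^ k - q) ∧
      (∀ x : ℝ, 1 < x → gfun d x = (q : ℝ) ^ k - q → x = x0) ∧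
      (∀ x : ℝ, 1 < x → x < x0 → (q : ℝ) ^ k - q < gfun d x) := by
  -- basic numerology
  have hqk : q ^ 2 ≤ q ^ k := Nat.pow_le_pow_right (by omega) hk
  have hq2 : q * q ≤ q ^ 2 := by rw [pow_two]
  have hqk12 : q + 12 ≤ q ^ k := by nlinarith
  obtain ⟨m, rfl⟩ : ∃ m, d = m + 2 := ⟨d - 2, by omega⟩
  set c : ℝ := (q : ℝ) ^ k - q with hc
  have hcast : (3:ℝ) * (q:ℝ) ^ k ≤ (m:ℝ) + 2 := by
    have h0 : ((3 * q ^ k : ℕ) : ℝ) ≤ ((m + 2 : ℕ) : ℝ) := Nat.cast_le.mpr hd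
    push_cast at h0
    linarith
  have hc2 : (2:ℝ) ≤ c := by
    have h1 : ((q + 12 : ℕ) : ℝ) ≤ ((q ^ k : ℕ) : ℝ) := Nat.cast_le.mpr hqk12
    push_cast at h1
    simp only [hc]
    linarith
  -- derivative is negative on Ioi 1
  have hderivneg : ∀ x : ℝ, x ∈ Set.Ioi (1:ℝ) →
      (-(((x ^ (m + 2) - 1) ^ 2 - ((m : ℝ) + 2) ^ 2 * x ^ (m + 1) * (x - 1) ^ 2)
          * (x ^ (m + 2) - 1) ^ (m + 1)
        / ((x ^ (m + 3) - 1) ^ (m + 2) * (x - 1) ^ 2))) < 0 := by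
    intro x hx
    have hx1 : (1:ℝ) < x := hx
    have hu : (0:ℝ) < x ^ (m + 2) - 1 := sub_pos.mpr (one_lt_pow₀ hx1 (by omega))
    have hv : (0:ℝ) < x ^ (m + 3) - 1 := sub_pos.mpr (one_lt_pow₀ hx1 (by omega))
    have hw : (0:ℝ) < x - 1 := sub_pos.mpr hx1
    have hgs := sq_geom_gt m x hx1
    have hgeom : ∑ i ∈ Finset.range (m + 2), x ^ i = (x ^ (m + 2) - 1) / (x - 1) :=
      geom_sum_eq (ne_of_gt hx1) (m + 2)
    have hP : 0 < (x ^ (m + 2) - 1) ^ 2 - ((m : ℝ) + 2) ^ 2 * x ^ (m + 1) * (x - 1) ^ 2 := by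
      rw [hgeom] at hgs
      rw [div_pow] at hgs
      have h4 : ((m : ℝ) + 2) ^ 2 * x ^ (m + 1) * (x - 1) ^ 2 < (x ^ (m + 2) - 1) ^ 2 := by
        rw [lt_div_iff₀ (by positivity)] at hgs
        linarith
      linarith
    have hnum : 0 < ((x ^ (m + 2) - 1) ^ 2 - ((m : ℝ) + 2) ^ 2 * x ^ (m + 1) * (x - 1) ^ 2)
        * (x ^ (m + 2) - 1) ^ (m + 1) := by positivity
    have hden : 0 < (x ^ (m + 3) - 1) ^ (m + 2) * (x - 1) ^ 2 := by positivity
    exact neg_neg_of_pos (div_pos hnum hden)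
  have hanti : StrictAntiOn (gfun (m + 2)) (Set.Ioi 1) := by
    apply strictAntiOn_of_deriv_neg (convex_Ioi 1)
    · exact fun x hx => ((gfun_hasDeriv m x hx).continuousAt).continuousWithinAt
    · intro x hx
      rw [interior_Ioi] at hx
      rw [(gfun_hasDeriv m x hx).deriv]
      exact hderivneg x hx
  -- the limit at 1⁺ exceeds c
  have hL3 : ((m:ℝ) + 2) / 3 ≤ (↑(m + 2) : ℝ) ^ (m + 2) / (↑(m + 3) : ℝ) ^ (m + 1) := by
    have hm2 : (0:ℝ) < (m:ℝ) + 2 := by positivity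
    have he1 : ((m:ℝ) + 3) ≤ ((m:ℝ) + 2) * Real.exp (1 / ((m:ℝ) + 2)) := by
      have := Real.add_one_le_exp (1 / ((m:ℝ) + 2))
      have h2 : ((m:ℝ) + 2) * (1 / ((m:ℝ) + 2) + 1) ≤ ((m:ℝ) + 2) * Real.exp (1 / ((m:ℝ) + 2)) :=
        mul_le_mul_of_nonneg_left this (le_of_lt hm2)
      calc ((m:ℝ) + 3) = ((m:ℝ) + 2) * (1 / ((m:ℝ) + 2) + 1) := by field_simp; ring
        _ ≤ _ := h2
    have he2 : ((m:ℝ) + 3) ^ (m + 1) ≤ (((m:ℝ) + 2) * Real.exp (1 / ((m:ℝ) + 2))) ^ (m + 1) :=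
      pow_le_pow_left₀ (by positivity) he1 (m + 1)
    have he3 : (((m:ℝ) + 2) * Real.exp (1 / ((m:ℝ) + 2))) ^ (m + 1)
        = ((m:ℝ) + 2) ^ (m + 1) * Real.exp ((↑(m + 1) : ℝ) * (1 / ((m:ℝ) + 2))) := by
      rw [mul_pow, Real.exp_nat_mul]
    have he4 : Real.exp ((↑(m + 1) : ℝ) * (1 / ((m:ℝ) + 2))) ≤ Real.exp 1 := by
      apply Real.exp_le_exp.mpr
      rw [mul_one_div, div_le_one hm2]
      push_cast
      linarith
    have he5 : Real.exp 1 ≤ 3 := le_of_lt (lt_trans Real.exp_one_lt_d9 (by norm_num))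
    have he6 : ((m:ℝ) + 3) ^ (m + 1) ≤ 3 * ((m:ℝ) + 2) ^ (m + 1) := by
      calc ((m:ℝ) + 3) ^ (m + 1) ≤ ((m:ℝ) + 2) ^ (m + 1) * Real.exp ((↑(m + 1) : ℝ) * (1 / ((m:ℝ) + 2))) := by
            rw [← he3]; exact he2
        _ ≤ ((m:ℝ) + 2) ^ (m + 1) * 3 := by
            exact mul_le_mul_of_nonneg_left (le_trans he4 he5) (by positivity)
        _ = 3 * ((m:ℝ) + 2) ^ (m + 1) := by ring
    rw [le_div_iff₀ (by positivity)]
    have : (↑(m + 2) : ℝ) ^ (m + 2) = ((m:ℝ) + 2) * ((m:ℝ) + 2) ^ (m + 1) := by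
      push_cast
      rw [← pow_succ']
    rw [this]
    push_cast
    calc ((m:ℝ) + 2) / 3 * ((m:ℝ) + 3) ^ (m + 1)
        ≤ ((m:ℝ) + 2) / 3 * (3 * ((m:ℝ) + 2) ^ (m + 1)) := by
          exact mul_le_mul_of_nonneg_left he6 (by positivity)
      _ = ((m:ℝ) + 2) * ((m:ℝ) + 2) ^ (m + 1) := by ring
  have hLc : c < (↑(m + 2) : ℝ) ^ (m + 2) / (↑(m + 3) : ℝ) ^ (m + 1) := by
    have hq0 : (0:ℝ) < (q:ℝ) := by positivity
    have h1 : c < (q:ℝ) ^ k := by simp only [hc]; linarith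
    have h2 : (q:ℝ) ^ k ≤ ((m:ℝ) + 2) / 3 := by linarith
    linarith
  -- find a point a ∈ (1,2) where gfun exceeds c
  have hev1 : ∀ᶠ y in 𝓝[>] (1:ℝ), c < gfun (m + 2) y :=
    (gfun_tendsto m).eventually (eventually_gt_nhds hLc)
  have hev2 : ∀ᶠ y in 𝓝[>] (1:ℝ), y ∈ Set.Ioo (1:ℝ) 2 :=
    Ioo_mem_nhdsGT_of_mem ⟨le_refl 1, one_lt_two⟩
  obtain ⟨a, hga, ha⟩ := (hev1.and hev2).exists
  -- gfun at 2 is less than 2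
  have hg2 : gfun (m + 2) 2 < 2 := by
    have hgf : gfun (m + 2) 2
        = ((2:ℝ) ^ (m + 2) - 1) ^ (m + 2) / (((2:ℝ) ^ (m + 3) - 1) ^ (m + 1) * (2 - 1)) := rfl
    have hu2 : (0:ℝ) < (2:ℝ) ^ (m + 2) - 1 := by
      have : (1:ℝ) < (2:ℝ) ^ (m + 2) := one_lt_pow₀ one_lt_two (by omega)
      linarith
    have hv2 : (0:ℝ) < (2:ℝ) ^ (m + 3) - 1 := by
      have : (1:ℝ) < (2:ℝ) ^ (m + 3) := one_lt_pow₀ one_lt_two (by omega)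
      linarith
    rw [hgf, div_lt_iff₀ (by positivity)]
    have h1 : 2 * ((2:ℝ) ^ (m + 2) - 1) ≤ (2:ℝ) ^ (m + 3) - 1 := by
      have : (2:ℝ) ^ (m + 3) = 2 * (2:ℝ) ^ (m + 2) := by rw [← pow_succ']
      linarith [this]
    have h2 : (2 * ((2:ℝ) ^ (m + 2) - 1)) ^ (m + 1) ≤ ((2:ℝ) ^ (m + 3) - 1) ^ (m + 1) :=
      pow_le_pow_left₀ (by positivity) h1 (m + 1)
    calc ((2:ℝ) ^ (m + 2) - 1) ^ (m + 2)
        = ((2:ℝ) ^ (m + 2) - 1) ^ (m + 1) * ((2:ℝ) ^ (m + 2) - 1) := by rw [← pow_succ]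
      _ < ((2:ℝ) ^ (m + 2) - 1) ^ (m + 1) * (2:ℝ) ^ (m + 2) := by
          exact mul_lt_mul_of_pos_left (by linarith) (by positivity)
      _ = 2 * (2 * ((2:ℝ) ^ (m + 2) - 1)) ^ (m + 1) := by
          rw [mul_pow]
          rw [show (2:ℝ) ^ (m + 2) = 2 * 2 ^ (m + 1) by rw [← pow_succ']]
          ring
      _ ≤ 2 * ((2:ℝ) ^ (m + 3) - 1) ^ (m + 1) := by linarith
      _ = 2 * (((2:ℝ) ^ (m + 3) - 1) ^ (m + 1) * (2 - 1)) := by ring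
  -- IVT between a and 2
  have ha1 : (1:ℝ) < a := ha.1
  have ha2 : a < 2 := ha.2
  have hcont : ContinuousOn (gfun (m + 2)) (Set.Icc a 2) := by
    intro y hy
    have hy1 : (1:ℝ) < y := lt_of_lt_of_le ha1 hy.1
    exact ((gfun_hasDeriv m y hy1).continuousAt).continuousWithinAt
  have hivt := intermediate_value_Icc' (le_of_lt ha2) hcont
  have hcmem : c ∈ Set.Icc (gfun (m + 2) 2) (gfun (m + 2) a) :=
    ⟨le_of_lt (lt_of_lt_of_le hg2 hc2), le_of_lt hga⟩
  obtain ⟨x0, hx0mem, hx0⟩ := hivt hcmem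
  have hx01 : (1:ℝ) < x0 := lt_of_lt_of_le ha1 hx0mem.1
  refine ⟨hanti, x0, ⟨hx01, hx0⟩, ?_, ?_⟩
  · intro x hx hgx
    exact hanti.injOn hx hx01 (hgx.trans hx0.symm)
  · intro x hx hxx0
    have h := hanti (Set.mem_Ioi.mpr hx) (Set.mem_Ioi.mpr hx01) hxx0
    rw [hx0] at h
    exact h
end

section
/- Let q ≥ 4 and k ≥ 2 be integers and d ≥ 3q^k an integer. For every fixed real y with 1 < y < 1 + 1/(q − 1), the set of reals x > 1 satisfying f2(x, y) = 0 has at most two elements. -/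
set_option maxHeartbeats 1000000 in
lemma aux13 (q k d : ℕ) (hq : 4 ≤ q) (hk : 2 ≤ k) (hd : 3 * q ^ k ≤ d)
    (y : ℝ) (hy1 : 1 < y) (hy2 : y < 1 + 1 / ((q : ℝ) - 1))
    (x1 x2 x3 : ℝ) (h1 : 1 < x1) (h12 : x1 < x2) (h23 : x2 < x3)
    (e1 : f2 q k d x1 y = 0) (e2 : f2 q k d x2 y = 0) (e3 : f2 q k d x3 y = 0) : False := by
  have hq' : (4:ℝ) ≤ (q:ℝ) := by exact_mod_cast hq
  have h1k : 1 ≤ q ^ k := Nat.one_le_pow _ _ (by omega)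
  have hd3 : 3 ≤ d := le_trans (by omega) hd
  have hqk : (q:ℝ) < (q:ℝ) ^ k := by
    have : q ^ 1 < q ^ k := Nat.pow_lt_pow_right (by omega) (by omega)
    exact_mod_cast (by simpa using this)
  have hY : 1 < y ^ d := one_lt_pow₀ hy1 (by omega)
  set B : ℝ := y ^ d / (y ^ d - 1) with hBdef
  set A : ℝ := (y - 1) * ((q:ℝ) ^ k - q) with hAdef
  set C : ℝ := (y - 1) * ((q:ℝ) - 1) - 1 with hCdef
  have hA : 0 < A := mul_pos (by linarith) (by linarith)
  have hB1 : 1 < B := (one_lt_div (by linarith)).mpr (by linarith)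
  have hq1 : (0:ℝ) < (q:ℝ) - 1 := by linarith
  have hC : C < 0 := by
    have h := (lt_div_iff₀ hq1).mp (show y - 1 < 1 / ((q:ℝ) - 1) by linarith)
    simp only [hCdef]; linarith
  have hF : ∀ x : ℝ, f2 q k d x y = A * (1 + B * (x - 1)) ^ d + C * x ^ d + 1 := by
    intro x
    unfold f2
    rw [show B * (x - 1) = y ^ d * (x - 1) / (y ^ d - 1) from div_mul_eq_mul_div _ _ _]
    ring
  set F : ℝ → ℝ := fun x => A * (1 + B * (x - 1)) ^ d + C * x ^ d + 1 with hFdef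
  have hderiv : ∀ x : ℝ, HasDerivAt F
      ((d:ℝ) * (A * B * (1 + B * (x - 1)) ^ (d - 1) + C * x ^ (d - 1))) x := by
    intro x
    have hu : HasDerivAt (fun x : ℝ => 1 + B * (x - 1)) B x := by
      simpa using (((hasDerivAt_id x).sub_const 1).const_mul B).const_add 1
    have h1 := (hu.pow d).const_mul A
    have h2 := (hasDerivAt_pow d x).const_mul C
    have := (h1.add h2).add_const 1
    refine HasDerivAt.congr_deriv this ?_
    push_cast
    ring
  have hcont : Continuous F := by fun_prop
  have rolle : ∀ s t : ℝ, s < t → F s = 0 → F t = 0 →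
      ∃ ξ ∈ Set.Ioo s t,
        (d:ℝ) * (A * B * (1 + B * (ξ - 1)) ^ (d - 1) + C * ξ ^ (d - 1)) = 0 := by
    intro s t hst hs ht
    exact exists_hasDerivAt_eq_zero hst hcont.continuousOn (by rw [hs, ht])
      (fun x _ => hderiv x)
  obtain ⟨ξ1, hξ1m, hg1⟩ := rolle x1 x2 h12 (by simp only [hFdef]; rw [← hF]; exact e1) (by simp only [hFdef]; rw [← hF]; exact e2)
  obtain ⟨ξ2, hξ2m, hg2⟩ := rolle x2 x3 h23 (by simp only [hFdef]; rw [← hF]; exact e2) (by simp only [hFdef]; rw [← hF]; exact e3)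
  have hdR : (0:ℝ) < (d:ℝ) := by exact_mod_cast (by omega : 0 < d)
  have hξ11 : 1 < ξ1 := lt_trans h1 hξ1m.1
  have hξ12 : ξ1 < ξ2 := lt_trans hξ1m.2 hξ2m.1
  have hξ21 : 1 < ξ2 := lt_trans hξ11 hξ12
  set m := d - 1 with hm
  have hg1' : A * B * (1 + B * (ξ1 - 1)) ^ m + C * ξ1 ^ m = 0 := by
    have := mul_eq_zero.mp hg1
    rcases this with h | h
    · linarith
    · exact h
  have hg2' : A * B * (1 + B * (ξ2 - 1)) ^ m + C * ξ2 ^ m = 0 := by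
    rcases mul_eq_zero.mp hg2 with h | h
    · linarith
    · exact h
  set u1 : ℝ := 1 + B * (ξ1 - 1) with hu1
  set u2 : ℝ := 1 + B * (ξ2 - 1) with hu2
  have hu1pos : 0 < u1 := by nlinarith
  have hu2pos : 0 < u2 := by nlinarith
  have hAB : A * B ≠ 0 := ne_of_gt (mul_pos hA (by linarith))
  have hkey : (u1 * ξ2) ^ m = (u2 * ξ1) ^ m := by
    apply mul_left_cancel₀ hAB
    rw [mul_pow, mul_pow]
    linear_combination ξ2 ^ m * hg1' - ξ1 ^ m * hg2'
  have hmne : m ≠ 0 := by omega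
  have heq : u1 * ξ2 = u2 * ξ1 :=
    pow_left_strictMonoOn₀ hmne |>.injOn
      (Set.mem_setOf.mpr (le_of_lt (mul_pos hu1pos (by linarith))))
      (Set.mem_setOf.mpr (le_of_lt (mul_pos hu2pos (by linarith)))) hkey
  nlinarith [mul_pos (sub_pos.mpr hB1) (sub_pos.mpr hξ12)]


/-- Let `q ≥ 4`, `k ≥ 2`, `d ≥ 3q^k` be integers. For every fixed real `y` with
`1 < y < 1 + 1/(q − 1)`, the set of reals `x > 1` satisfying `f2(x, y) = 0` has at most two
elements. -/
theorem stmt13 (q k d : ℕ) (hq : 4 ≤ q) (hk : 2 ≤ k) (hd : 3 * q ^ k ≤ d)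
    (y : ℝ) (hy1 : 1 < y) (hy2 : y < 1 + 1 / ((q : ℝ) - 1))
    (a b c : ℝ) (ha : 1 < a) (ha0 : f2 q k d a y = 0)
    (hb : 1 < b) (hb0 : f2 q k d b y = 0)
    (hc : 1 < c) (hc0 : f2 q k d c y = 0) :
    a = b ∨ a = c ∨ b = c := by
  have key := fun x1 x2 x3 h1 h12 h23 e1 e2 e3 =>
    aux13 q k d hq hk hd y hy1 hy2 x1 x2 x3 h1 h12 h23 e1 e2 e3
  rcases lt_trichotomy a b with h1 | h1 | h1
  · rcases lt_trichotomy b c with h2 | h2 | h2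
    · exact (key a b c ha h1 h2 ha0 hb0 hc0).elim
    · exact Or.inr (Or.inr h2)
    · rcases lt_trichotomy a c with h3 | h3 | h3
      · exact (key a c b ha h3 h2 ha0 hc0 hb0).elim
      · exact Or.inr (Or.inl h3)
      · exact (key c a b hc h3 h1 hc0 ha0 hb0).elim
  · exact Or.inl h1
  · rcases lt_trichotomy a c with h2 | h2 | h2
    · exact (key b a c hb h1 h2 hb0 ha0 hc0).elim
    · exact Or.inr (Or.inl h2)
    · rcases lt_trichotomy b c with h3 | h3 | h3
      · exact (key b c a hb h3 h2 hb0 hc0 ha0).elim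
      · exact Or.inr (Or.inr h3)
      · exact (key c b a hc h3 h1 hc0 hb0 ha0).elim
end

section
/- Let q ≥ 4, k ≥ 2 and d ≥ 5q^k be integers and t := (q^k − q)^{1/(d+1)}. Then every real x > 0 satisfying the one-step recursion x = ((t²·x + q·t)/(t·x + q − 1))^d also satisfies t·x + q − 1 < d. -/
/-- Let `q ≥ 4`, `k ≥ 2` and `d ≥ 5q^k` be integers and `t = (q^k − q)^{1/(d+1)}`. Then
every real `x > 0` satisfying the one-step recursion
`x = ((t²·x + q·t)/(t·x + q − 1))^d` also satisfies `t·x + q − 1 < d`. -/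
theorem stmt17 (q k d : ℕ) (hq : 4 ≤ q) (hk : 2 ≤ k) (hd : 5 * q ^ k ≤ d)
    (t : ℝ) (ht : t = ((q : ℝ) ^ k - q) ^ (1 / ((d : ℝ) + 1)))
    (x : ℝ) (hx : 0 < x)
    (hfix : x = ((t ^ 2 * x + q * t) / (t * x + q - 1)) ^ d) :
    t * x + (q : ℝ) - 1 < d := by
  have hq' : (4:ℝ) ≤ (q:ℝ) := by exact_mod_cast hq
  have hq1 : (1:ℝ) ≤ (q:ℝ) := by linarith
  have hqk2 : (q:ℝ) ^ 2 ≤ (q:ℝ) ^ k := pow_le_pow_right₀ hq1 hk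
  have hqk : (16:ℝ) ≤ (q:ℝ) ^ k := by nlinarith
  have hA : (12:ℝ) ≤ (q:ℝ) ^ k - q := by nlinarith
  have hA0 : (0:ℝ) < (q:ℝ) ^ k - q := by linarith
  have hd' : 5 * (q:ℝ) ^ k ≤ (d:ℝ) := by exact_mod_cast hd
  have hdpos : (0:ℝ) < d := by nlinarith
  have ht0 : 1 < t := by
    rw [ht]
    rw [Real.one_lt_rpow_iff_of_pos hA0]
    left
    constructor
    · linarith
    · positivity
  have htpow : t ^ (d + 1) = (q:ℝ) ^ k - q := by
    rw [ht, ← Real.rpow_natCast (((q:ℝ) ^ k - (q:ℝ)) ^ (1 / ((d:ℝ) + 1))) (d + 1),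
        ← Real.rpow_mul hA0.le]
    push_cast
    rw [one_div, inv_mul_cancel₀ (by positivity), Real.rpow_one]
  by_contra hcon
  push_neg at hcon
  set s : ℝ := t * x + q - 1 with hs
  have hspos : (0:ℝ) < s := lt_of_lt_of_le hdpos hcon
  have hkey : t ^ 2 * x + q * t = t * (s + 1) := by rw [hs]; ring
  have hxform : x = t ^ d * ((s + 1) / s) ^ d := by
    rw [hfix, hkey, mul_div_assoc, mul_pow]
  have h1 : (s + 1) / s ≤ 1 + 1 / (d:ℝ) := by
    rw [add_div, div_self hspos.ne']
    gcongr
  have hratio0 : (0:ℝ) ≤ (s + 1) / s := by positivity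
  have h2 : (1 + 1 / (d:ℝ)) ^ d ≤ Real.exp 1 := by
    calc (1 + 1 / (d:ℝ)) ^ d ≤ (Real.exp (1 / (d:ℝ))) ^ d := by
          gcongr
          rw [add_comm]; exact Real.add_one_le_exp _
      _ = Real.exp 1 := by
          rw [← Real.exp_nat_mul]
          congr 1
          field_simp
  have h3 : ((s + 1) / s) ^ d ≤ 3 := by
    have := Real.exp_one_lt_d9
    calc ((s + 1) / s) ^ d ≤ (1 + 1 / (d:ℝ)) ^ d := by gcongr
      _ ≤ Real.exp 1 := h2
      _ ≤ 3 := by linarith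
  have htd0 : (0:ℝ) < t ^ d := by positivity
  have hxle : x ≤ 3 * t ^ d := by
    rw [hxform]
    nlinarith
  have htx : t * x ≤ 3 * ((q:ℝ) ^ k - q) := by
    calc t * x ≤ t * (3 * t ^ d) := by
          exact mul_le_mul_of_nonneg_left hxle (by linarith)
      _ = 3 * t ^ (d + 1) := by ring
      _ = 3 * ((q:ℝ) ^ k - q) := by rw [htpow]
  have : s ≤ 3 * (q:ℝ) ^ k - 2 * q - 1 := by rw [hs]; linarith
  linarith
end

section
/- Let q ≥ 4, k ≥ 2 and d ≥ 5q^k be integers and t := (q^k − q)^{1/(d+1)}. Then there exist reals x, y > 0 satisfying the two-step system x = t^d·((t·y + q)/(t·y + q − 1))^d and y = t^d·((t·x + q)/(t·x + q − 1))^d, with x > y and x > d²/(q^k − q). -/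
set_option maxHeartbeats 2000000

private noncomputable def Ff (t q : ℝ) (d : ℕ) (z : ℝ) : ℝ := t ^ d * ((t * z + q) / (t * z + q - 1)) ^ d

private lemma exp_aux {x : ℝ} (hx : 4 ≤ x) : 3 * x ^ 2 ≤ Real.exp x := by
  have h4 : (54.5 : ℝ) ≤ Real.exp 4 := by
    have h := Real.exp_one_gt_d9
    have he : Real.exp (4:ℝ) = (Real.exp 1) ^ (4:ℕ) := by
      rw [← Real.exp_nat_mul]; norm_num
    have hp : (2.7182818283:ℝ)^(4:ℕ) ≤ (Real.exp 1)^(4:ℕ) :=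
      pow_le_pow_left₀ (by norm_num) h.le 4
    rw [he]; nlinarith [hp]
  have hs : Real.exp x = Real.exp 4 * Real.exp ((x-4)/2) ^ 2 := by
    rw [sq, ← Real.exp_add, ← Real.exp_add]; ring_nf
  have hb : 1 + (x-4)/2 ≤ Real.exp ((x-4)/2) := by
    have := Real.add_one_le_exp ((x-4)/2); linarith
  rw [hs]
  nlinarith [sq_nonneg (Real.exp ((x-4)/2) - (1 + (x-4)/2)), sq_nonneg (x-4), Real.exp_pos ((x-4)/2)]

private lemma inv_exp_aux {s : ℝ} (h1 : s < 1) : Real.exp s ≤ 1 / (1 - s) := by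
  have h := Real.add_one_le_exp (-s)
  rw [Real.exp_neg] at h
  have hp := Real.exp_pos s
  rw [le_div_iff₀ (by linarith)]
  have h2 : (1 - s) * Real.exp s ≤ (Real.exp s)⁻¹ * Real.exp s :=
    mul_le_mul_of_nonneg_right (by linarith) hp.le
  rw [inv_mul_cancel₀ hp.ne'] at h2
  linarith

private lemma main_aux (q : ℝ) (d : ℕ) (m t : ℝ)
    (hq4 : 4 ≤ q) (hm : 12 ≤ m) (hqm : 3 * q ≤ m)
    (hd : 5 * (m + q) ≤ (d : ℝ))
    (ht : t = Real.exp (Real.log m / ((d : ℝ) + 1))) :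
    ∃ x y : ℝ, 0 < x ∧ 0 < y ∧
      x = t ^ d * ((t * y + q) / (t * y + q - 1)) ^ d ∧
      y = t ^ d * ((t * x + q) / (t * x + q - 1)) ^ d ∧
      y < x ∧ (d : ℝ) ^ 2 / m < x := by
  have hm0 : (0:ℝ) < m := by linarith
  have hd0 : (0:ℝ) < (d:ℝ) := by linarith
  have hdm : 5 * m ≤ (d:ℝ) := by linarith
  have ht0 : 0 < t := by rw [ht]; exact Real.exp_pos _
  have ht1 : 1 ≤ t := by
    rw [ht]
    apply Real.one_le_exp
    have h1 : 0 ≤ Real.log m := Real.log_nonneg (by linarith)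
    positivity
  have htd1 : t ^ (d+1) = m := by
    rw [ht, ← Real.exp_nat_mul]
    rw [show ((d+1:ℕ):ℝ) * (Real.log m / ((d:ℝ)+1)) = Real.log m by
      push_cast; field_simp]
    exact Real.exp_log hm0
  have htd : t ^ d * t = m := by rw [← pow_succ]; exact htd1
  have htdv : t ^ d = m / t := by rw [eq_div_iff ht0.ne']; exact htd
  -- log bound
  have hsq := Real.sq_sqrt hm0.le
  have hsqn := Real.sqrt_nonneg m
  have hs : (10/3:ℝ) ≤ Real.sqrt m := by nlinarith
  have hlm : Real.log m ≤ 2 * Real.sqrt m - 2 := by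
    have h1 : Real.log (Real.sqrt m) ≤ Real.sqrt m - 1 :=
      Real.log_le_sub_one_of_pos (by nlinarith)
    have h2 : Real.log (Real.sqrt m) = Real.log m / 2 := Real.log_sqrt hm0.le
    linarith
  have hlog : Real.log m / ((d:ℝ)+1) ≤ 3/25 := by
    rw [div_le_iff₀ (by linarith)]
    nlinarith [mul_nonneg (sub_nonneg.2 hs) hsqn]
  have hte : t ≤ 25/22 := by
    rw [ht]
    calc Real.exp (Real.log m/((d:ℝ)+1)) ≤ Real.exp (3/25) := Real.exp_le_exp.mpr hlog
    _ ≤ 1/(1-3/25) := inv_exp_aux (by norm_num)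
    _ = 25/22 := by norm_num
  have hmt : (22/25) * m ≤ t ^ d := by
    rw [htdv, le_div_iff₀ ht0]
    nlinarith
  -- basic facts about F
  have hden : ∀ z : ℝ, 0 ≤ z → 3 ≤ t * z + q - 1 := by
    intro z hz
    nlinarith [mul_nonneg ht0.le hz]
  have hrat1 : ∀ z : ℝ, 0 ≤ z → 1 ≤ (t * z + q) / (t * z + q - 1) := by
    intro z hz
    have h3 := hden z hz
    rw [le_div_iff₀ (by linarith)]
    linarith
  have hFlb : ∀ z : ℝ, 0 ≤ z → (22/25) * m ≤ Ff t q d z := by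
    intro z hz
    have h1 : (1:ℝ) ≤ ((t * z + q) / (t * z + q - 1)) ^ d :=
      one_le_pow₀ (hrat1 z hz)
    calc (22/25)*m ≤ t^d := hmt
    _ = t^d * 1 := by ring
    _ ≤ Ff t q d z := mul_le_mul_of_nonneg_left h1 (by positivity)
  have hF0 : ∀ z : ℝ, 0 ≤ z → 0 < Ff t q d z :=
    fun z hz => lt_of_lt_of_le (by nlinarith) (hFlb z hz)
  have hFnn : ∀ z : ℝ, 0 ≤ z → 0 ≤ Ff t q d z := fun z hz => (hF0 z hz).le
  set a : ℝ := (11/10) * (d:ℝ)^2 / m with ha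
  have ha0 : 0 < a := by rw [ha]; positivity
  have hkey1 : ∀ z : ℝ, a ≤ z → t * Ff t q d z ≤ (121/100) * m := by
    intro z hz
    have hz0 : (0:ℝ) ≤ z := le_trans ha0.le hz
    have h3 := hden z hz0
    have hzd : a ≤ t * z + q - 1 := by
      nlinarith [mul_le_mul_of_nonneg_right ht1 hz0]
    have hr : (t * z + q) / (t * z + q - 1) ≤ Real.exp (1/a) := by
      have e1 : (t * z + q) / (t * z + q - 1) = 1 + 1/(t*z+q-1) := by
        field_simp; ring
      have e2 : 1/(t*z+q-1) ≤ 1/a := by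
        apply one_div_le_one_div_of_le ha0 hzd
      have e3 : 1 + 1/a ≤ Real.exp (1/a) := by
        have := Real.add_one_le_exp (1/a); linarith
      rw [e1]; linarith
    have hrp : (0:ℝ) ≤ (t*z+q)/(t*z+q-1) := le_trans zero_le_one (hrat1 z hz0)
    have hpow : ((t * z + q) / (t * z + q - 1))^d ≤ Real.exp (1/a) ^ d :=
      pow_le_pow_left₀ hrp hr d
    have hexp : Real.exp (1/a) ^ d = Real.exp ((d:ℝ)/a) := by
      rw [← Real.exp_nat_mul, mul_one_div]
    have hda : (d:ℝ)/a ≤ 2/11 := by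
      have e4 : (d:ℝ)/a = 10*m/(11*(d:ℝ)) := by
        rw [ha]; field_simp
      rw [e4, div_le_iff₀ (by positivity)]
      nlinarith
    have hexp2 : Real.exp ((d:ℝ)/a) ≤ 121/100 := by
      have e5 : Real.exp ((2:ℝ)/11) = Real.exp (1/11) ^ 2 := by
        rw [sq, ← Real.exp_add]; norm_num
      have e6 : Real.exp ((1:ℝ)/11) ≤ 11/10 := by
        calc Real.exp ((1:ℝ)/11) ≤ 1/(1-1/11) := inv_exp_aux (by norm_num)
        _ = 11/10 := by norm_num
      have e7 := Real.exp_pos ((1:ℝ)/11)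
      calc Real.exp ((d:ℝ)/a) ≤ Real.exp (2/11) := Real.exp_le_exp.mpr hda
      _ = Real.exp (1/11) ^ 2 := e5
      _ ≤ 121/100 := by nlinarith
    have e8 : t * Ff t q d z = m * ((t * z + q) / (t * z + q - 1))^d := by
      simp only [Ff]; rw [← htd]; ring
    rw [e8]
    have hrd : ((t * z + q) / (t * z + q - 1))^d ≤ 121/100 := by
      calc ((t * z + q) / (t * z + q - 1))^d ≤ Real.exp (1/a) ^ d := hpow
      _ = Real.exp ((d:ℝ)/a) := hexp
      _ ≤ 121/100 := hexp2
    nlinarith [pow_nonneg hrp d]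
  have hFub : ∀ z : ℝ, a ≤ z → Ff t q d z ≤ (121/100) * m := by
    intro z hz
    have hz0 : (0:ℝ) ≤ z := le_trans ha0.le hz
    have h1 : Ff t q d z ≤ t * Ff t q d z := le_mul_of_one_le_left (hFnn z hz0) ht1
    exact h1.trans (hkey1 z hz)
  have hkey2 : a ≤ Ff t q d (Ff t q d a) := by
    have hy0 : 0 ≤ Ff t q d a := hFnn a ha0.le
    have hty : t * Ff t q d a ≤ (121/100) * m := hkey1 a le_rfl
    set N : ℝ := t * Ff t q d a + q - 1 with hN
    have hN3 : 3 ≤ N := hden _ hy0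
    have hN0 : (0:ℝ) < N := by linarith
    have hN10 : (0:ℝ) < N + 1 := by linarith
    have hN1 : N + 1 ≤ (121/100) * m + q := by rw [hN]; linarith
    have hD : (0:ℝ) < (121/100)*m + q := by linarith
    have hratlb : Real.exp (1/(N+1)) ≤ (N+1)/N := by
      have h := inv_exp_aux (show (1:ℝ)/(N+1) < 1 by
        rw [div_lt_one hN10]; linarith)
      have he : 1/(1 - 1/(N+1)) = (N+1)/N := by
        rw [one_sub_div hN10.ne']
        rw [one_div_div]
        ring_nf
      rw [he] at h
      exact h
    set x0 : ℝ := (d:ℝ)/((121/100)*m + q) with hx0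
    have hx4 : (4:ℝ) ≤ x0 := by
      rw [hx0, le_div_iff₀ hD]
      linarith
    have hdN : x0 ≤ (d:ℝ)/(N+1) := by
      rw [hx0]
      gcongr
    have hpowlb : Real.exp x0 ≤ ((N+1)/N)^d := by
      calc Real.exp x0 ≤ Real.exp ((d:ℝ)/(N+1)) := Real.exp_le_exp.mpr hdN
      _ = Real.exp (1/(N+1)) ^ d := by rw [← Real.exp_nat_mul, mul_one_div]
      _ ≤ ((N+1)/N)^d := pow_le_pow_left₀ (Real.exp_pos _).le hratlb d
    have hFy : Ff t q d (Ff t q d a) = t^d * ((N+1)/N)^d := by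
      simp only [Ff]
      rw [show t * (t ^ d * ((t * a + q) / (t * a + q - 1)) ^ d) + q - 1 = N by
        rw [hN]; simp only [Ff]]
      rw [show t * (t ^ d * ((t * a + q) / (t * a + q - 1)) ^ d) + q = N + 1 by
        rw [hN]; simp only [Ff]; ring]
    have key : (11/10) * ((121/100)*m + q)^2 ≤ (66/25) * m^2 := by
      nlinarith [mul_nonneg (by linarith : (0:ℝ) ≤ q) (by linarith : (0:ℝ) ≤ m - 3*q),
        mul_nonneg hm0.le (by linarith : (0:ℝ) ≤ m - 3*q)]
    have h2 : a ≤ (66/25)*m*(d:ℝ)^2/((121/100)*m+q)^2 := by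
      rw [ha, div_le_div_iff₀ hm0 (by positivity)]
      nlinarith [mul_le_mul_of_nonneg_left key (sq_nonneg (d:ℝ))]
    have hexpx := exp_aux hx4
    calc a ≤ (66/25)*m*(d:ℝ)^2/((121/100)*m+q)^2 := h2
    _ = (22/25)*m*(3*x0^2) := by rw [hx0]; field_simp; ring
    _ ≤ (22/25)*m*(Real.exp x0) := by nlinarith
    _ ≤ t^d * ((N+1)/N)^d := by
        apply mul_le_mul hmt hpowlb (Real.exp_pos _).le (by positivity)
    _ = Ff t q d (Ff t q d a) := hFy.symm
  set M : ℝ := t^d * (q/(q-1))^d with hM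
  have hFubM : ∀ z : ℝ, 0 ≤ z → Ff t q d z ≤ M := by
    intro z hz
    have h3 := hden z hz
    have hr : (t * z + q) / (t * z + q - 1) ≤ q/(q-1) := by
      rw [div_le_div_iff₀ (by linarith) (by linarith)]
      nlinarith [mul_nonneg ht0.le hz]
    rw [hM]
    exact mul_le_mul_of_nonneg_left
      (pow_le_pow_left₀ (le_trans zero_le_one (hrat1 z hz)) hr d) (by positivity)
  have haM : a ≤ M := hkey2.trans (hFubM (Ff t q d a) (hFnn a ha0.le))
  have hsub : Set.Icc a M ⊆ Set.Ici (0:ℝ) := fun z hz => le_trans ha0.le hz.1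
  have hFc : ContinuousOn (Ff t q d) (Set.Ici (0:ℝ)) := by
    apply ContinuousOn.mul continuousOn_const
    apply ContinuousOn.pow
    apply ContinuousOn.div
    · fun_prop
    · fun_prop
    · intro z hz
      have := hden z hz
      intro h0
      rw [h0] at this
      linarith
  have hmaps : Set.MapsTo (Ff t q d) (Set.Icc a M) (Set.Ici (0:ℝ)) :=
    fun z hz => hFnn z (hsub hz)
  have hGc : ContinuousOn (fun z => Ff t q d (Ff t q d z) - z) (Set.Icc a M) :=
    (hFc.comp (hFc.mono hsub) hmaps).sub continuousOn_id
  have h0mem : (0:ℝ) ∈ Set.Icc (Ff t q d (Ff t q d M) - M) (Ff t q d (Ff t q d a) - a) := by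
    constructor
    · have h1 : Ff t q d (Ff t q d M) ≤ M := hFubM _ (hFnn M (le_trans ha0.le haM))
      linarith
    · linarith [hkey2]
  obtain ⟨x, hx, hfix⟩ := intermediate_value_Icc' haM hGc h0mem
  have hxa : a ≤ x := hx.1
  have hxpos : (0:ℝ) < x := lt_of_lt_of_le ha0 hxa
  have hfix2 : Ff t q d (Ff t q d x) = x := by
    have : Ff t q d (Ff t q d x) - x = 0 := hfix
    linarith
  have hma : (121/100)*m < a := by
    rw [ha, lt_div_iff₀ hm0]
    nlinarith
  refine ⟨x, Ff t q d x, hxpos, hF0 x hxpos.le, ?_, rfl, ?_, ?_⟩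
  · exact hfix2.symm
  · calc Ff t q d x ≤ (121/100)*m := hFub x hxa
    _ < a := hma
    _ ≤ x := hxa
  · have h9 : (d:ℝ)^2/m < a := by
      rw [ha, div_lt_div_iff₀ hm0 hm0]
      nlinarith
    linarith

/-- Let `q ≥ 4`, `k ≥ 2` and `d ≥ 5q^k` be integers and `t = (q^k − q)^{1/(d+1)}`. Then
there exist positive reals `x, y` satisfying the two-step system
`x = t^d·((t·y + q)/(t·y + q − 1))^d` and `y = t^d·((t·x + q)/(t·x + q − 1))^d`, with
`x > y` and `x > d²/(q^k − q)`. -/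
theorem stmt18 (q k d : ℕ) (hq : 4 ≤ q) (hk : 2 ≤ k) (hd : 5 * q ^ k ≤ d)
    (t : ℝ) (ht : t = ((q : ℝ) ^ k - q) ^ (1 / ((d : ℝ) + 1))) :
    ∃ x y : ℝ, 0 < x ∧ 0 < y ∧
      x = t ^ d * ((t * y + q) / (t * y + q - 1)) ^ d ∧
      y = t ^ d * ((t * x + q) / (t * x + q - 1)) ^ d ∧
      y < x ∧ (d : ℝ) ^ 2 / ((q : ℝ) ^ k - q) < x := by
  have hqr : (4:ℝ) ≤ (q:ℝ) := by exact_mod_cast hq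
  have hq1 : (1:ℝ) ≤ (q:ℝ) := by linarith
  have hqk : (q:ℝ)^2 ≤ (q:ℝ)^k := pow_le_pow_right₀ hq1 hk
  have hqm : 3*(q:ℝ) ≤ (q:ℝ)^k - q := by nlinarith
  have hm12 : (12:ℝ) ≤ (q:ℝ)^k - q := by nlinarith
  have hdr : 5 * (((q:ℝ)^k - q) + q) ≤ (d:ℝ) := by
    have h1 : ((5 * q^k : ℕ):ℝ) ≤ (d:ℝ) := by exact_mod_cast hd
    push_cast at h1
    linarith
  have hm0 : (0:ℝ) < (q:ℝ)^k - q := by linarith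
  have ht' : t = Real.exp (Real.log ((q:ℝ)^k - q) / ((d:ℝ)+1)) := by
    rw [ht, Real.rpow_def_of_pos hm0, mul_one_div]
  exact main_aux q d ((q:ℝ)^k - q) t hqr hm12 hqm hdr ht'
end

section
/- Let q ≥ 4 and k ≥ 2 be integers and d = 5q^k. Then the equation u = 1 + 1/((q^k − q)·u^d + q − 1) has a unique real solution u > 1, and this solution satisfies u < 1 + 1/(2(q^k − q − 1)). -/
lemma stmt19_aux (Q c : ℝ) (d : ℕ) (hQ : 0 < Q) (hc : 0 < c) (hd : d ≠ 0)
    (a b : ℝ) (ha : 1 < a) (hab : a < b)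
    (hfa : a = 1 + 1/(Q*a^d + c)) (hfb : b = 1 + 1/(Q*b^d + c)) : False := by
  have ha0 : (0:ℝ) ≤ a := by linarith
  have h1 : a^d < b^d := pow_lt_pow_left₀ hab ha0 hd
  have ha1 : (0:ℝ) ≤ a^d := pow_nonneg ha0 d
  have hDa : 0 < Q*a^d + c := by nlinarith
  have hDb : 0 < Q*b^d + c := by nlinarith
  have hlt : 1/(Q*b^d + c) < 1/(Q*a^d + c) := by
    apply one_div_lt_one_div_of_lt hDa
    nlinarith
  linarith

/-- Let `q ≥ 4` and `k ≥ 2` be integers and `d = 5q^k`. Then the equation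
`u = 1 + 1/((q^k − q)·u^d + q − 1)` has a unique real solution `u > 1`, and this solution
satisfies `u < 1 + 1/(2(q^k − q − 1))`. -/
theorem stmt19 (q k d : ℕ) (hq : 4 ≤ q) (hk : 2 ≤ k) (hd : d = 5 * q ^ k) :
    ∃ u : ℝ, 1 < u ∧ u = 1 + 1 / (((q : ℝ) ^ k - q) * u ^ d + q - 1) ∧
      u < 1 + 1 / (2 * ((q : ℝ) ^ k - q - 1)) ∧
      ∀ u' : ℝ, 1 < u' → u' = 1 + 1 / (((q : ℝ) ^ k - q) * u' ^ d + q - 1) → u' = u := by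
  have hq4 : (4:ℝ) ≤ (q:ℝ) := by exact_mod_cast hq
  have hq1 : (1:ℝ) ≤ (q:ℝ) := by linarith
  have hqk2 : (q:ℝ)^2 ≤ (q:ℝ)^k := pow_le_pow_right₀ (by linarith) hk
  set Q : ℝ := (q:ℝ)^k - (q:ℝ) with hQdef
  have hQ12 : 12 ≤ Q := by nlinarith
  have hQpos : 0 < Q := by linarith
  have hcpos : 0 < (q:ℝ) - 1 := by linarith
  have hdR : (d:ℝ) = 5 * (q:ℝ)^k := by rw [hd]; push_cast; ring
  have hdne : d ≠ 0 := by
    rw [hd]; positivity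
  -- bound B
  set B : ℝ := 1 + 1/(2*(Q-1)) with hBdef
  have h2Q : 0 < 2*(Q-1) := by linarith
  have hxpos : 0 < 1/(2*(Q-1)) := by positivity
  have hB1 : 1 < B := by rw [hBdef]; linarith
  -- Bernoulli
  have hbern : 1 + (d:ℝ) * (1/(2*(Q-1))) ≤ B^d := by
    have := one_add_mul_le_pow (by linarith : (-2:ℝ) ≤ 1/(2*(Q-1))) d
    simpa [hBdef] using this
  have hdx : (5:ℝ)/2 ≤ (d:ℝ) * (1/(2*(Q-1))) := by
    rw [hdR, mul_one_div, le_div_iff₀ h2Q]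
    have : Q ≤ (q:ℝ)^k := by rw [hQdef]; linarith
    linarith
  have hBd : (7:ℝ)/2 ≤ B^d := by linarith
  -- the function
  set F : ℝ → ℝ := fun u => u - (1 + 1/(Q * u^d + (q:ℝ) - 1)) with hF
  have hden : ∀ u ∈ Set.Icc (1:ℝ) B, 0 < Q * u^d + (q:ℝ) - 1 := by
    intro u hu
    have h0 : (0:ℝ) ≤ u^d := pow_nonneg (le_trans zero_le_one hu.1) d
    nlinarith
  have hcont : ContinuousOn F (Set.Icc 1 B) := by
    apply ContinuousOn.sub continuousOn_id
    apply ContinuousOn.add continuousOn_const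
    apply ContinuousOn.div continuousOn_const
    · fun_prop
    · intro u hu
      exact ne_of_gt (hden u hu)
  have hF1 : F 1 < 0 := by
    have hD : 0 < Q * (1:ℝ)^d + (q:ℝ) - 1 := hden 1 ⟨le_refl _, le_of_lt hB1⟩
    have : 0 < 1/(Q * (1:ℝ)^d + (q:ℝ) - 1) := by positivity
    simp only [hF]
    linarith
  have hFB : 0 < F B := by
    have hDB : 0 < Q * B^d + (q:ℝ) - 1 := hden B ⟨le_of_lt hB1, le_refl _⟩
    have key : 2*(Q-1) < Q * B^d + (q:ℝ) - 1 := by nlinarith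
    have : 1/(Q * B^d + (q:ℝ) - 1) < 1/(2*(Q-1)) :=
      one_div_lt_one_div_of_lt h2Q key
    simp only [hF, hBdef]
    linarith
  have hivt := intermediate_value_Ioo (le_of_lt hB1) hcont
  have h0mem : (0:ℝ) ∈ Set.Ioo (F 1) (F B) := ⟨hF1, hFB⟩
  obtain ⟨u, humem, huF⟩ := hivt h0mem
  have hu1 : 1 < u := humem.1
  have huB : u < B := humem.2
  have hueq : u = 1 + 1/(Q * u^d + (q:ℝ) - 1) := by
    have : u - (1 + 1/(Q * u^d + (q:ℝ) - 1)) = 0 := huF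
    linarith
  refine ⟨u, hu1, hueq, ?_, ?_⟩
  · calc u < B := huB
      _ = 1 + 1 / (2 * ((q:ℝ)^k - (q:ℝ) - 1)) := by rw [hBdef, hQdef]
  · intro u' hu'1 hu'eq
    have hu'eq' : u' = 1 + 1/(Q * u'^d + ((q:ℝ) - 1)) := by
      rw [show Q * u'^d + ((q:ℝ) - 1) = Q * u'^d + (q:ℝ) - 1 by ring]; exact hu'eq
    have hueq' : u = 1 + 1/(Q * u^d + ((q:ℝ) - 1)) := by
      rw [show Q * u^d + ((q:ℝ) - 1) = Q * u^d + (q:ℝ) - 1 by ring]; exact hueq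
    rcases lt_trichotomy u' u with h | h | h
    · exact absurd (stmt19_aux Q ((q:ℝ)-1) d hQpos hcpos hdne u' u hu'1 h hu'eq' hueq') (by simp)
    · exact h
    · exact absurd (stmt19_aux Q ((q:ℝ)-1) d hQpos hcpos hdne u u' hu1 h hueq' hu'eq') (by simp)
end
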